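/- For every real r > 0 with r ≠ 1 and all real λ, μ, ν, the coloured R-matrices R_r^{λ,μ} satisfy the coloured quantum Yang–Baxter equation R₁₂^{λ,μ} * R₁₃^{λ,ν} * R₂₃^{μ,ν} = R₂₃^{μ,ν} * R₁₃^{λ,ν} * R₁₂^{λ,μ}. -/

import Mathlib

noncomputable section

open Matrix Real

/-- The coloured `R`-matrix `R_r^{λ,μ}` of the coloured quantum group `GL_r^{λ,μ}(2)`,
indexed by `Fin 2 × Fin 2` (indices `0,1` correspond to the paper's `1,2`);
the powers of `r` are real powers. -/
def RcolQ (r l μ : ℝ) : Matrix (Fin 2 × Fin 2) (Fin 2 × Fin 2) ℝ :=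
  fun p q =>
    if p = (0, 0) ∧ q = (0, 0) then r ^ (1 - (l - μ))
    else if p = (0, 1) ∧ q = (0, 1) then r ^ (l + μ)
    else if p = (0, 1) ∧ q = (1, 0) then r - r⁻¹
    else if p = (1, 0) ∧ q = (1, 0) then r ^ (-(l + μ))
    else if p = (1, 1) ∧ q = (1, 1) then r ^ (1 + (l - μ))
    else 0

/-- Leg embedding `R₁₂` acting on the first two tensor factors. -/
def leg12 {n : ℕ} (R : Matrix (Fin n × Fin n) (Fin n × Fin n) ℝ) :
    Matrix (Fin n × Fin n × Fin n) (Fin n × Fin n × Fin n) ℝ :=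
  fun p q => if p.2.2 = q.2.2 then R (p.1, p.2.1) (q.1, q.2.1) else 0

/-- Leg embedding `R₁₃` acting on the first and third tensor factors. -/
def leg13 {n : ℕ} (R : Matrix (Fin n × Fin n) (Fin n × Fin n) ℝ) :
    Matrix (Fin n × Fin n × Fin n) (Fin n × Fin n × Fin n) ℝ :=
  fun p q => if p.2.1 = q.2.1 then R (p.1, p.2.2) (q.1, q.2.2) else 0

/-- Leg embedding `R₂₃` acting on the last two tensor factors. -/
def leg23 {n : ℕ} (R : Matrix (Fin n × Fin n) (Fin n × Fin n) ℝ) :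
    Matrix (Fin n × Fin n × Fin n) (Fin n × Fin n × Fin n) ℝ :=
  fun p q => if p.1 = q.1 then R (p.2.1, p.2.2) (q.2.1, q.2.2) else 0

/-! Put `x = r ^ λ`, `y = r ^ μ`, `z = r ^ ν`. Then `R_r^{λ,μ}` is the upper-triangular matrix
with diagonal `(r y / x, x y, (x y)⁻¹, r x / y)` and single off-diagonal entry `r - r⁻¹`. For
matrices of this five-entry shape all but six of the 64 component equations of the Yang–Baxter
equation hold identically, and the remaining six reduce to monomial identities in `r, x, y, z`
together with `r (r - r⁻¹) = r ^ 2 - 1`. -/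

section
variable {n : ℕ} (X Y Z : Matrix (Fin n × Fin n) (Fin n × Fin n) ℝ)

theorem leg12_mul_leg13_mul_leg23_apply (i j k i' j' k' : Fin n) :
    (leg12 X * leg13 Y * leg23 Z) (i, j, k) (i', j', k') =
      ∑ b, ∑ c, ∑ a, X (i, j) (a, b) * Y (a, k) (i', c) * Z (b, c) (j', k') := by
  simp [mul_apply, Fintype.sum_prod_type, leg12, leg13, leg23, ite_mul, mul_ite, Finset.sum_mul]

theorem leg23_mul_leg13_mul_leg12_apply (i j k i' j' k' : Fin n) :
    (leg23 Z * leg13 Y * leg12 X) (i, j, k) (i', j', k') =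
      ∑ a, ∑ b, ∑ c, Z (j, k) (b, c) * Y (i, c) (a, k') * X (a, b) (i', j') := by
  simp [mul_apply, Fintype.sum_prod_type, leg12, leg13, leg23, ite_mul, mul_ite, Finset.sum_mul]

end

def fiveVertex (a b c d e : ℝ) : Matrix (Fin 2 × Fin 2) (Fin 2 × Fin 2) ℝ :=
  fun p q =>
    if p = (0, 0) ∧ q = (0, 0) then a
    else if p = (0, 1) ∧ q = (0, 1) then b
    else if p = (0, 1) ∧ q = (1, 0) then c
    else if p = (1, 0) ∧ q = (1, 0) then d
    else if p = (1, 1) ∧ q = (1, 1) then e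
    else 0

theorem fiveVertex_YBE {a₁ b₁ c₁ d₁ e₁ a₂ b₂ c₂ d₂ e₂ a₃ b₃ c₃ d₃ e₃ : ℝ}
    (h₁ : a₁ * b₂ * c₃ = a₂ * b₁ * c₃)
    (h₂ : a₁ * a₃ * c₂ = a₂ * c₁ * c₃ + b₃ * c₂ * d₁)
    (h₃ : a₃ * c₁ * d₂ = a₂ * c₁ * d₃)
    (h₄ : b₃ * c₁ * e₂ = b₂ * c₁ * e₃)
    (h₅ : c₁ * c₃ * e₂ + b₁ * c₂ * d₃ = c₂ * e₁ * e₃)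
    (h₆ : c₃ * d₁ * e₂ = c₃ * d₂ * e₁) :
    leg12 (fiveVertex a₁ b₁ c₁ d₁ e₁) * leg13 (fiveVertex a₂ b₂ c₂ d₂ e₂) *
        leg23 (fiveVertex a₃ b₃ c₃ d₃ e₃) =
      leg23 (fiveVertex a₃ b₃ c₃ d₃ e₃) * leg13 (fiveVertex a₂ b₂ c₂ d₂ e₂) *
        leg12 (fiveVertex a₁ b₁ c₁ d₁ e₁) := by
  ext ⟨i, j, k⟩ ⟨i', j', k'⟩
  rw [leg12_mul_leg13_mul_leg23_apply, leg23_mul_leg13_mul_leg12_apply]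
  fin_cases i <;> fin_cases j <;> fin_cases k <;> fin_cases i' <;> fin_cases j' <;> fin_cases k' <;>
    simp only [fiveVertex, Fin.sum_univ_two, Fin.isValue, Fin.mk_one, Fin.zero_eta, Prod.mk.injEq,
      Finset.mem_univ, Finset.sum_const_zero, Finset.sum_ite_eq', Finset.sum_ite_irrel, ite_mul,
      mul_ite, ite_self, mul_zero, zero_mul, add_zero, zero_add, one_ne_zero, zero_ne_one, and_self,
      and_true, true_and, and_false, false_and, reduceIte] <;>
    first
      | ring1
      | linear_combination h₁
      | linear_combination h₂
      | linear_combination h₃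
      | linear_combination h₄
      | linear_combination h₅
      | linear_combination h₆

def RcolQMul (r x y : ℝ) : Matrix (Fin 2 × Fin 2) (Fin 2 × Fin 2) ℝ :=
  fiveVertex (r * y / x) (x * y) (r - r⁻¹) (x * y)⁻¹ (r * x / y)

theorem RcolQMul_YBE {r x y z : ℝ} (hr : r ≠ 0) (hy : y ≠ 0) :
    leg12 (RcolQMul r x y) * leg13 (RcolQMul r x z) * leg23 (RcolQMul r y z) =
      leg23 (RcolQMul r y z) * leg13 (RcolQMul r x z) * leg12 (RcolQMul r x y) := by
  apply fiveVertex_YBE <;> field_simp <;> ring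

theorem RcolQ_eq_RcolQMul {r : ℝ} (hr : 0 < r) (l μ : ℝ) :
    RcolQ r l μ = RcolQMul r (r ^ l) (r ^ μ) := by
  change fiveVertex (r ^ (1 - (l - μ))) (r ^ (l + μ)) (r - r⁻¹) (r ^ (-(l + μ)))
    (r ^ (1 + (l - μ))) = _
  rw [RcolQMul]
  congr 1 <;> simp only [rpow_add hr, rpow_sub hr, rpow_neg hr.le, rpow_one] <;> field_simp

theorem RcolQ_CQYBE (r : ℝ) (hr : 0 < r) (l μ ν : ℝ) :
    leg12 (RcolQ r l μ) * leg13 (RcolQ r l ν) * leg23 (RcolQ r μ ν) =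
      leg23 (RcolQ r μ ν) * leg13 (RcolQ r l ν) * leg12 (RcolQ r l μ) := by
  simp only [RcolQ_eq_RcolQMul hr]
  exact RcolQMul_YBE hr.ne' (rpow_pos_of_pos hr μ).ne'
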